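/- For any tree T there exists a maximum-weight bn-independent broadcast f such that f(v) = 1 for every broadcasting vertex v that is not a leaf. -/

import Mathlib

/-!
Let `f` be a maximum bn-independent broadcast and `v` a non-leaf with `f v = k ≥ 2`. No vertex at
distance less than `k` from `v` hears any other broadcast, so the broadcast of `v` can be
rearranged inside its ball: either it is split into strengths `k - 1` and `1`, or, when the
branches at `v` away from a farthest vertex are shallow, it is moved to a neighbour of larger
eccentricity. Both moves keep the weight, and repeating them terminates.
-/

open SimpleGraph Finset
open scoped Classical

noncomputable section

/-- Eccentricity of a vertex. -/
def gecc {V : Type*} (G : SimpleGraph V) [Fintype V] (v : V) : ℕ :=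
  Finset.univ.sup fun u => G.dist v u

/-- A broadcast: `f v ≤ e(v)` for all `v`. -/
def IsBroadcast {V : Type*} (G : SimpleGraph V) [Fintype V] (f : V → ℕ) : Prop :=
  ∀ v, f v ≤ gecc G v

/-- `u` hears `f` from `v`. -/
def Hears {V : Type*} (G : SimpleGraph V) (f : V → ℕ) (u v : V) : Prop :=
  0 < f v ∧ G.dist u v ≤ f v

/-- Boundary independent broadcast: a vertex hearing two or more broadcasting
vertices lies in the boundary of each. -/
def BnIndep {V : Type*} (G : SimpleGraph V) [Fintype V] (f : V → ℕ) : Prop :=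
  IsBroadcast G f ∧
    ∀ w v₁ v₂, v₁ ≠ v₂ → Hears G f w v₁ → Hears G f w v₂ → G.dist w v₁ = f v₁

/-- Weight of a broadcast. -/
def bweight {V : Type*} [Fintype V] (f : V → ℕ) : ℕ := ∑ v, f v

/-- The boundary independence number. -/
def alphaBn {V : Type*} (G : SimpleGraph V) [Fintype V] : ℕ :=
  sSup {w | ∃ f, BnIndep G f ∧ bweight f = w}

/-- Set of branch vertices (degree at least 3). -/
def branchSet {V : Type*} (G : SimpleGraph V) [Fintype V] : Finset V :=
  Finset.univ.filter fun v => 3 ≤ G.degree v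

/-- `l` is a leaf joined to `v` by an endpath (all internal vertices of degree 2). -/
def IsEndpathTo {V : Type*} (G : SimpleGraph V) [Fintype V] (v l : V) : Prop :=
  G.degree l = 1 ∧ ∃ p : G.Walk v l, p.IsPath ∧
    ∀ u ∈ p.support, u ≠ v → u ≠ l → G.degree u = 2

/-- Leaf set `L(v)` of a vertex `v`. -/
def leafSet {V : Type*} (G : SimpleGraph V) [Fintype V] (v : V) : Finset V :=
  Finset.univ.filter fun l => IsEndpathTo G v l

/-- `R(T)`: branch vertices with at most one leaf in their leaf set. -/
def rset {V : Type*} (G : SimpleGraph V) [Fintype V] : Finset V :=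
  (branchSet G).filter fun v => (leafSet G v).card ≤ 1

/-- Edge `uv` is covered by broadcasting vertex `x`. -/
def Covers {V : Type*} (G : SimpleGraph V) (f : V → ℕ) (x u v : V) : Prop :=
  0 < f x ∧ G.Adj u v ∧ G.dist u x ≤ f x ∧ G.dist v x ≤ f x ∧
    (G.dist u x < f x ∨ G.dist v x < f x)

/-- The graph `G - U_f^E` obtained by deleting all `f`-uncovered edges. -/
def coveredSubgraph {V : Type*} (G : SimpleGraph V) (f : V → ℕ) : SimpleGraph V where
  Adj u v := G.Adj u v ∧ ∃ x, Covers G f x u v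
  symm := by
    constructor
    rintro u v ⟨h, x, h1, h2, h3, h4, h5⟩
    exact ⟨h.symm, x, h1, h2.symm, h4, h3, h5.symm⟩
  loopless := by constructor; rintro u ⟨h, -⟩; exact G.loopless.irrefl u h

/-- `f` is a maximal bn-independent broadcast. -/
def MaximalBn {V : Type*} (G : SimpleGraph V) [Fintype V] (f : V → ℕ) : Prop :=
  BnIndep G f ∧ ∀ g, BnIndep G g → (∀ v, f v ≤ g v) → g = f

/-- The `f`-private boundary of `v`: vertices of `N_f(v)` not dominated once the
broadcast strength of `v` is lowered by one. -/
def privBoundary {V : Type*} (G : SimpleGraph V) (f : V → ℕ) (v : V) : Set V :=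
  {u | G.dist u v ≤ f v ∧ ∀ x, ¬ Hears G (Function.update f v (f v - 1)) u x}

/-- The branch representation: branch vertices adjacent iff the path between them
contains no other branch vertex. -/
def branchRep {V : Type*} (G : SimpleGraph V) [Fintype V] : SimpleGraph V where
  Adj b₁ b₂ := b₁ ≠ b₂ ∧ 3 ≤ G.degree b₁ ∧ 3 ≤ G.degree b₂ ∧
    ∀ p : G.Walk b₁ b₂, p.IsPath → ∀ u ∈ p.support, 3 ≤ G.degree u → u = b₁ ∨ u = b₂
  symm := by
    constructor
    rintro a b ⟨hab, ha, hb, h⟩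
    refine ⟨hab.symm, hb, ha, fun p hp u hu hdeg => ?_⟩
    have hu' : u ∈ p.reverse.support := by
      rw [SimpleGraph.Walk.support_reverse]; exact List.mem_reverse.mpr hu
    exact (h p.reverse hp.reverse u hu' hdeg).symm
  loopless := by constructor; rintro v ⟨h, -⟩; exact h rfl

/-- Hearing independent broadcast. -/
def HIndep {V : Type*} (G : SimpleGraph V) [Fintype V] (f : V → ℕ) : Prop :=
  IsBroadcast G f ∧ ∀ u v, u ≠ v → 0 < f u → 0 < f v → f v < G.dist u v

/-- The hearing independence number. -/
def alphaH {V : Type*} (G : SimpleGraph V) [Fintype V] : ℕ :=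
  sSup {w | ∃ f, HIndep G f ∧ bweight f = w}

/-- Diameter. -/
def gdiam {V : Type*} (G : SimpleGraph V) [Fintype V] : ℕ :=
  Finset.univ.sup fun v => gecc G v


open Function

namespace SimpleGraph

variable {V : Type*} {G : SimpleGraph V}

lemma Connected.exists_dist_eq_of_le_dist (hG : G.Connected) {u v : V} {i : ℕ}
    (hi : i ≤ G.dist u v) : ∃ w, G.dist u w = i ∧ G.dist w v + i = G.dist u v := by
  obtain ⟨p, hp⟩ := hG.exists_walk_length_eq_dist u v
  have htake := dist_le (p.take i)
  have hdrop := dist_le (p.drop i)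
  have htri := hG.dist_triangle (u := u) (v := p.getVert i) (w := v)
  simp only [Walk.take_length, Walk.drop_length] at htake hdrop
  exact ⟨p.getVert i, by omega, by omega⟩

/-- Shortest walks from `v` to `y` through `u₁` and through `u₂` would be two distinct paths. -/
lemma IsTree.dist_eq_add_one_of_adj_of_ne (hT : G.IsTree) {v u₁ u₂ y : V} (h₁ : G.Adj v u₁)
    (h₂ : G.Adj v u₂) (hne : u₁ ≠ u₂) (hy : G.dist y v = G.dist y u₁ + 1) :
    G.dist y u₂ = G.dist y v + 1 := by
  refine (hT.dist_eq_dist_add_one_of_adj y h₂).resolve_left fun hy₂ => hne ?_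
  obtain ⟨p₁, hp₁⟩ := hT.connected.exists_walk_length_eq_dist u₁ y
  obtain ⟨p₂, hp₂⟩ := hT.connected.exists_walk_length_eq_dist u₂ y
  have hpath : ∀ {u} (h : G.Adj v u) (p : G.Walk u y), p.length = G.dist u y →
      G.dist y v = G.dist y u + 1 → (Walk.cons h p).IsPath := fun h p hp hyu =>
    (Walk.cons h p).isPath_of_length_eq_dist (by
      rw [Walk.length_cons, hp, dist_comm (u := v), hyu, dist_comm])
  have := (hT.existsUnique_path v y).unique (hpath h₁ p₁ hp₁ hy) (hpath h₂ p₂ hp₂ hy₂)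
  simpa using congrArg Walk.snd this

end SimpleGraph

lemma Finset.sum_comp_update_add {α β M : Type*} [Fintype α] [DecidableEq α] [AddCommMonoid M]
    (F : α → β → M) (f : α → β) (a : α) (b : β) :
    ∑ x, F x (update f a b x) + F a (f a) = ∑ x, F x (f x) + F a b := by
  have hsplit : ∀ h : α → β, ∑ x, F x (h x) = F a (h a) + ∑ x ∈ univ.erase a, F x (h x) :=
    fun h => (add_sum_erase _ _ (mem_univ a)).symm
  rw [hsplit (update f a b), hsplit f, update_self,
    sum_congr rfl fun x hx => by rw [update_of_ne (ne_of_mem_erase hx)]]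
  abel

section Broadcast

variable {V : Type*} [Fintype V] {T : SimpleGraph V} {f : V → ℕ} {v : V}

lemma dist_le_gecc (T : SimpleGraph V) (x y : V) : T.dist x y ≤ gecc T x :=
  le_sup (f := fun y => T.dist x y) (mem_univ y)

lemma gecc_le_gdiam (T : SimpleGraph V) (x : V) : gecc T x ≤ gdiam T :=
  le_sup (f := gecc T) (mem_univ x)

lemma exists_bnIndep_bweight_eq_alphaBn (T : SimpleGraph V) :
    ∃ f, BnIndep T f ∧ bweight f = alphaBn T := by
  have hzero : BnIndep T 0 :=
    ⟨fun _ => Nat.zero_le _, fun _ _ _ _ h => absurd h.1 (lt_irrefl 0)⟩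
  have hbdd : BddAbove {w | ∃ f, BnIndep T f ∧ bweight f = w} := by
    refine ⟨Fintype.card V * gdiam T, ?_⟩
    rintro _ ⟨f, hf, rfl⟩
    calc bweight f ≤ ∑ _x : V, gdiam T :=
          sum_le_sum fun x _ => (hf.1 x).trans (gecc_le_gdiam T x)
      _ = Fintype.card V * gdiam T := by simp
  exact Nat.sSup_mem (s := {w | ∃ f, BnIndep T f ∧ bweight f = w})
    ⟨0, 0, hzero, by simp [bweight]⟩ hbdd

lemma BnIndep.not_hears_of_dist_lt (hf : BnIndep T f) {w x : V} (hwv : T.dist w v < f v)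
    (hxv : x ≠ v) : ¬ Hears T f w x :=
  fun hx => (hf.2 w v x hxv.symm ⟨by omega, hwv.le⟩ hx).not_lt hwv

lemma BnIndep.eq_zero_of_dist_lt (hf : BnIndep T f) {x : V} (hxv : T.dist x v < f v)
    (hne : x ≠ v) : f x = 0 := by
  by_contra h
  exact hf.not_hears_of_dist_lt hxv hne ⟨Nat.pos_of_ne_zero h, by simp⟩

/-- A vertex hearing a changed broadcast from `S` and an unchanged one hears both `v` and another
vertex under `f`, so it lies on the boundary of the `f`-ball of `v`. -/
lemma BnIndep.of_eq_off {g : V → ℕ} {S : Set V} (hf : BnIndep T f) (hg : IsBroadcast T g)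
    (hv : 0 < f v) (hvS : v ∈ S) (hout : ∀ x ∉ S, g x = f x)
    (hball : ∀ w s, s ∈ S → Hears T g w s → T.dist w v ≤ f v)
    (hbdry : ∀ w s, s ∈ S → Hears T g w s → T.dist w v = f v → T.dist w s = g s)
    (hS : ∀ w s s', s ∈ S → s' ∈ S → s ≠ s' → Hears T g w s → Hears T g w s' →
      T.dist w s = g s) :
    BnIndep T g := by
  refine ⟨hg, fun w a b hab ha hb => ?_⟩
  have hears : ∀ x ∉ S, Hears T g w x → Hears T f w x := fun x hx h => by
    rwa [Hears, ← hout x hx]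
  have hears_v : ∀ s ∈ S, Hears T g w s → Hears T f w v := fun s hs h => ⟨hv, hball w s hs h⟩
  have hne_v : ∀ x ∉ S, x ≠ v := fun x hx h => hx (h ▸ hvS)
  by_cases haS : a ∈ S <;> by_cases hbS : b ∈ S
  · exact hS w a b haS hbS hab ha hb
  · exact hbdry w a haS ha (hf.2 w v b (hne_v b hbS).symm (hears_v a haS ha) (hears b hbS hb))
  · rw [hout a haS]
    exact hf.2 w a v (hne_v a haS) (hears a haS ha) (hears_v b hbS hb)
  · rw [hout a haS]
    exact hf.2 w a b hab (hears a haS ha) (hears b hbS hb)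

def shiftBroadcast (f : V → ℕ) (v t : V) : V → ℕ := update (update f v 0) t (f v)

def splitBroadcast (f : V → ℕ) (v u w : V) : V → ℕ :=
  update (update (update f v 0) u (f v - 1)) w 1

lemma bnIndep_shiftBroadcast (hf : BnIndep T f) (hv : 0 < f v) {t : V} (ht : t ≠ v)
    (hecc : f v ≤ gecc T t) (hin : ∀ w, T.dist w t ≤ f v → T.dist w v < f v) :
    BnIndep T (shiftBroadcast f v t) := by
  have gv : shiftBroadcast f v t v = 0 := by simp [shiftBroadcast, ht.symm]
  have gt : shiftBroadcast f v t t = f v := by simp [shiftBroadcast]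
  have hout : ∀ x ∉ ({v, t} : Set V), shiftBroadcast f v t x = f x := fun x hx => by
    simp only [Set.mem_insert_iff, Set.mem_singleton_iff, not_or] at hx
    simp [shiftBroadcast, hx.1, hx.2]
  have honly : ∀ s ∈ ({v, t} : Set V), 0 < shiftBroadcast f v t s → s = t := fun s hs h => by
    rcases hs with rfl | rfl
    · omega
    · rfl
  refine hf.of_eq_off (v := v) (S := {v, t}) (fun x => ?_) hv (by simp) hout ?_ ?_ ?_
  · by_cases hxv : x = v
    · simp [hxv, gv]
    by_cases hxt : x = t
    · rw [hxt, gt]; exact hecc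
    · rw [hout x (by simp [hxv, hxt])]; exact hf.1 x
  · rintro w s hs ⟨hs₀, hws⟩
    obtain rfl := honly s hs hs₀
    exact (hin w (gt ▸ hws)).le
  · rintro w s hs ⟨hs₀, hws⟩ hwv
    obtain rfl := honly s hs hs₀
    exact absurd hwv (hin w (gt ▸ hws)).ne
  · rintro w s s' hs hs' hss' ⟨hs₀, -⟩ ⟨hs'₀, -⟩
    exact absurd ((honly s hs hs₀).trans (honly s' hs' hs'₀).symm) hss'

lemma bnIndep_splitBroadcast (hconn : T.Connected) (hf : BnIndep T f) (hv : 2 ≤ f v) {u w : V}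
    (hu : T.dist u v = 1) (hw : T.dist w v + 1 = f v) (huw : T.dist w u = f v) :
    BnIndep T (splitBroadcast f v u w) := by
  have huv : u ≠ v := by rintro rfl; simp at hu
  have hwv : w ≠ v := by rintro rfl; simp at hw; omega
  have hwu : w ≠ u := by rintro rfl; simp at huw; omega
  have gv : splitBroadcast f v u w v = 0 := by simp [splitBroadcast, huv.symm, hwv.symm]
  have gu : splitBroadcast f v u w u = f v - 1 := by simp [splitBroadcast, hwu.symm]
  have gw : splitBroadcast f v u w w = 1 := by simp [splitBroadcast]
  have hout : ∀ x ∉ ({v, u, w} : Set V), splitBroadcast f v u w x = f x := fun x hx => by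
    simp only [Set.mem_insert_iff, Set.mem_singleton_iff, not_or] at hx
    simp [splitBroadcast, hx.1, hx.2.1, hx.2.2]
  have hval : ∀ s ∈ ({v, u, w} : Set V), 0 < splitBroadcast f v u w s →
      (s = u ∧ splitBroadcast f v u w s = f v - 1) ∨ (s = w ∧ splitBroadcast f v u w s = 1) :=
    fun s hs h => by
      rcases hs with rfl | rfl | rfl
      · omega
      · exact .inl ⟨rfl, gu⟩
      · exact .inr ⟨rfl, gw⟩
  have tri : ∀ x, T.dist x v ≤ T.dist x u + 1 ∧ T.dist x u ≤ T.dist x v + 1 ∧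
      T.dist x v ≤ T.dist x w + (f v - 1) ∧ f v ≤ T.dist x u + T.dist x w := fun x => by
    have := hconn.dist_triangle (u := x) (v := u) (w := v)
    have := hconn.dist_triangle (u := x) (v := v) (w := u)
    have := hconn.dist_triangle (u := x) (v := w) (w := v)
    have := hconn.dist_triangle (u := w) (v := x) (w := u)
    rw [SimpleGraph.dist_comm (u := v) (v := u)] at *
    rw [SimpleGraph.dist_comm (u := w) (v := x)] at *
    omega
  refine hf.of_eq_off (v := v) (S := {v, u, w}) (fun x => ?_) (by omega) (by simp) hout
    ?_ ?_ ?_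
  · by_cases hxv : x = v
    · simp [hxv, gv]
    by_cases hxu : x = u
    · rw [hxu, gu]
      exact (dist_le_gecc T u w).trans' (by rw [SimpleGraph.dist_comm]; omega)
    by_cases hxw : x = w
    · rw [hxw, gw]
      exact (dist_le_gecc T w u).trans' (by omega)
    · rw [hout x (by simp [hxv, hxu, hxw])]; exact hf.1 x
  · rintro x s hs ⟨hs₀, hxs⟩
    have := tri x
    rcases hval s hs hs₀ with ⟨rfl, hg⟩ | ⟨rfl, hg⟩ <;> omega
  · rintro x s hs ⟨hs₀, hxs⟩ hxv
    have := tri x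
    rcases hval s hs hs₀ with ⟨rfl, hg⟩ | ⟨rfl, hg⟩ <;> omega
  · rintro x s s' hs hs' hss' ⟨hs₀, hxs⟩ ⟨hs'₀, hxs'⟩
    have := tri x
    rcases hval s hs hs₀ with ⟨rfl, hg⟩ | ⟨rfl, hg⟩ <;>
      rcases hval s' hs' hs'₀ with ⟨rfl, hg'⟩ | ⟨rfl, hg'⟩
    all_goals first | exact absurd rfl hss' | omega

/-- Lowering a heavy strength, or moving a heavy broadcast to a vertex of larger eccentricity,
lowers this term, since `gdiam T + 1` exceeds every eccentricity. -/
def heavyTerm (T : SimpleGraph V) (x : V) (n : ℕ) : ℕ :=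
  if 2 ≤ n ∧ T.degree x ≠ 1 then (gdiam T + 1) * n - gecc T x else 0

def heavyPotential (T : SimpleGraph V) (f : V → ℕ) : ℕ := ∑ x, heavyTerm T x (f x)

lemma heavyTerm_zero (x : V) : heavyTerm T x 0 = 0 := if_neg (by omega)

lemma heavyTerm_one (x : V) : heavyTerm T x 1 = 0 := if_neg (by omega)

lemma heavyTerm_of_heavy {x : V} {n : ℕ} (hn : 2 ≤ n) (hdeg : T.degree x ≠ 1) :
    heavyTerm T x n = (gdiam T + 1) * n - gecc T x :=
  if_pos ⟨hn, hdeg⟩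

lemma heavyTerm_le (x : V) (n : ℕ) : heavyTerm T x n ≤ (gdiam T + 1) * n := by
  unfold heavyTerm; split_ifs <;> omega

lemma mul_sub_one_lt_heavyTerm (hv : 2 ≤ f v) (hdeg : T.degree v ≠ 1) :
    (gdiam T + 1) * (f v - 1) < heavyTerm T v (f v) := by
  have hecc := gecc_le_gdiam T v
  have hmul : (gdiam T + 1) * (f v - 1) + (gdiam T + 1) = (gdiam T + 1) * f v := by
    rw [← Nat.mul_succ]; congr 1; omega
  rw [heavyTerm_of_heavy hv hdeg]
  omega

lemma bweight_shiftBroadcast {t : V} (ht : t ≠ v) (hft : f t = 0) :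
    bweight (shiftBroadcast f v t) = bweight f := by
  have h₁ := sum_comp_update_add (fun _ n => n) (update f v 0) t (f v)
  have h₂ := sum_comp_update_add (fun _ n => n) f v 0
  simp only [update_of_ne ht, hft] at h₁
  simp only [bweight, shiftBroadcast]
  omega

lemma heavyPotential_shiftBroadcast_lt (hv : 2 ≤ f v) (hdeg : T.degree v ≠ 1) {t : V}
    (ht : t ≠ v) (hft : f t = 0) (hecc : gecc T v < gecc T t) :
    heavyPotential T (shiftBroadcast f v t) < heavyPotential T f := by
  have h₁ := sum_comp_update_add (heavyTerm T) (update f v 0) t (f v)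
  have h₂ := sum_comp_update_add (heavyTerm T) f v 0
  simp only [update_of_ne ht, hft, heavyTerm_zero] at h₁ h₂
  have hlt : heavyTerm T t (f v) < heavyTerm T v (f v) := by
    have h := mul_sub_one_lt_heavyTerm hv hdeg
    rw [heavyTerm_of_heavy hv hdeg] at h ⊢
    rw [heavyTerm]
    split_ifs <;> omega
  simp only [heavyPotential, shiftBroadcast]
  omega

lemma bweight_splitBroadcast (hv : 2 ≤ f v) {u w : V} (huv : u ≠ v) (hwv : w ≠ v)
    (hwu : w ≠ u) (hfu : f u = 0) (hfw : f w = 0) :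
    bweight (splitBroadcast f v u w) = bweight f := by
  have h₁ := sum_comp_update_add (fun _ n => n) (update (update f v 0) u (f v - 1)) w 1
  have h₂ := sum_comp_update_add (fun _ n => n) (update f v 0) u (f v - 1)
  have h₃ := sum_comp_update_add (fun _ n => n) f v 0
  simp only [update_of_ne huv, update_of_ne hwv, update_of_ne hwu, hfu, hfw] at h₁ h₂
  simp only [bweight, splitBroadcast]
  omega

lemma heavyPotential_splitBroadcast_lt (hv : 2 ≤ f v) (hdeg : T.degree v ≠ 1) {u w : V}
    (huv : u ≠ v) (hwv : w ≠ v) (hwu : w ≠ u) (hfu : f u = 0) (hfw : f w = 0) :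
    heavyPotential T (splitBroadcast f v u w) < heavyPotential T f := by
  have h₁ := sum_comp_update_add (heavyTerm T) (update (update f v 0) u (f v - 1)) w 1
  have h₂ := sum_comp_update_add (heavyTerm T) (update f v 0) u (f v - 1)
  have h₃ := sum_comp_update_add (heavyTerm T) f v 0
  simp only [update_of_ne huv, update_of_ne hwv, update_of_ne hwu, hfu, hfw, heavyTerm_zero,
    heavyTerm_one] at h₁ h₂ h₃
  have := mul_sub_one_lt_heavyTerm hv hdeg
  have := heavyTerm_le (T := T) u (f v - 1)
  simp only [heavyPotential, splitBroadcast]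
  omega

lemma BnIndep.exists_heavyPotential_lt_of_split (hconn : T.Connected) (hf : BnIndep T f)
    (hv : 2 ≤ f v) (hdeg : T.degree v ≠ 1) {u y : V} (hu : T.Adj v u)
    (hyu : T.dist y u = T.dist y v + 1) (hyv : f v ≤ T.dist y v + 1) :
    ∃ g, BnIndep T g ∧ bweight g = bweight f ∧ heavyPotential T g < heavyPotential T f := by
  obtain ⟨w, hvw, hwy⟩ := hconn.exists_dist_eq_of_le_dist (u := v) (v := y) (i := f v - 1)
    (by rw [SimpleGraph.dist_comm]; omega)
  have hwu : T.dist w u = f v := by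
    have := hconn.dist_triangle (u := w) (v := v) (w := u)
    have := hconn.dist_triangle (u := y) (v := w) (w := u)
    rw [SimpleGraph.dist_comm (u := w) (v := v), SimpleGraph.dist_comm (u := y) (v := w),
      SimpleGraph.dist_comm (u := y) (v := v), dist_eq_one_iff_adj.mpr hu] at *
    omega
  have huv : T.dist u v = 1 := dist_eq_one_iff_adj.mpr hu.symm
  rw [SimpleGraph.dist_comm] at hvw
  have hwv : w ≠ v := fun h => by rw [h, SimpleGraph.dist_self] at hvw; omega
  have hwu' : w ≠ u := fun h => by rw [h, SimpleGraph.dist_self] at hwu; omega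
  have hfu := hf.eq_zero_of_dist_lt (x := u) (by omega) hu.ne'
  have hfw := hf.eq_zero_of_dist_lt (x := w) (by omega) hwv
  exact ⟨splitBroadcast f v u w, bnIndep_splitBroadcast hconn hf hv huv (by omega) hwu,
    bweight_splitBroadcast hv hu.ne' hwv hwu' hfu hfw,
    heavyPotential_splitBroadcast_lt hv hdeg hu.ne' hwv hwu' hfu hfw⟩

/-- Let `u₁` be the neighbour of `v` towards a farthest vertex `z`. If the branches at `v` avoiding
`u₁` reach depth `f v - 1`, split; otherwise they are so shallow that the broadcast of `v`, moved
to another neighbour `u₂`, stays inside the interior of the ball of `v`, and `u₂` is farther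
from `z`. -/
lemma BnIndep.exists_heavyPotential_lt (hT : T.IsTree) (hf : BnIndep T f) (hv : 2 ≤ f v)
    (hdeg : T.degree v ≠ 1) :
    ∃ g, BnIndep T g ∧ bweight g = bweight f ∧ heavyPotential T g < heavyPotential T f := by
  have : Nonempty V := ⟨v⟩
  obtain ⟨z, -, hz⟩ := exists_mem_eq_sup univ univ_nonempty (T.dist v)
  have hvz : f v ≤ T.dist v z := hz ▸ hf.1 v
  obtain ⟨u₁, hvu₁, hu₁z⟩ := hT.connected.exists_dist_eq_of_le_dist (u := v) (v := z) (i := 1)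
    (by omega)
  have hadj₁ : T.Adj v u₁ := dist_eq_one_iff_adj.mp hvu₁
  obtain ⟨u₂, hu₂, hne⟩ : ∃ u₂ ∈ T.neighborFinset v, u₂ ≠ u₁ := by
    refine exists_mem_ne ?_ u₁
    have := (T.degree_pos_iff_exists_adj v).mpr ⟨u₁, hadj₁⟩
    rw [card_neighborFinset_eq_degree]
    omega
  rw [mem_neighborFinset] at hu₂
  by_cases hdeep : ∃ y, T.dist y u₁ = T.dist y v + 1 ∧ f v ≤ T.dist y v + 1
  · obtain ⟨y, hyu₁, hyv⟩ := hdeep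
    exact hf.exists_heavyPotential_lt_of_split hT.connected hv hdeg hadj₁ hyu₁ hyv
  · push Not at hdeep
    have hin : ∀ w, T.dist w u₂ ≤ f v → T.dist w v < f v := fun w hw => by
      rcases hT.dist_eq_dist_add_one_of_adj w hadj₁ with h | h
      · have := hT.dist_eq_add_one_of_adj_of_ne hadj₁ hu₂ hne.symm h
        omega
      · have := hdeep w h
        omega
    have hecc : gecc T v < gecc T u₂ := by
      have hz₂ : T.dist z u₂ = T.dist z v + 1 :=
        hT.dist_eq_add_one_of_adj_of_ne hadj₁ hu₂ hne.symm (by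
          rw [SimpleGraph.dist_comm (u := z), SimpleGraph.dist_comm (u := z)]; exact hu₁z.symm)
      calc gecc T v = T.dist v z := hz
        _ < T.dist u₂ z := by
          rw [SimpleGraph.dist_comm (u := u₂), hz₂, SimpleGraph.dist_comm]; omega
        _ ≤ gecc T u₂ := dist_le_gecc T u₂ z
    have hfu₂ := hf.eq_zero_of_dist_lt (x := u₂)
      (by rw [SimpleGraph.dist_comm, dist_eq_one_iff_adj.mpr hu₂]; omega) hu₂.ne'
    exact ⟨shiftBroadcast f v u₂, bnIndep_shiftBroadcast hf (by omega) hu₂.ne'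
      ((hf.1 v).trans hecc.le) hin,
      bweight_shiftBroadcast hu₂.ne' hfu₂,
      heavyPotential_shiftBroadcast_lt hv hdeg hu₂.ne' hfu₂ hecc⟩

theorem BnIndep.exists_forall_nonleaf_eq_one (hT : T.IsTree) (hf : BnIndep T f) :
    ∃ g, BnIndep T g ∧ bweight g = bweight f ∧ ∀ v, 0 < g v → T.degree v ≠ 1 → g v = 1 := by
  induction hΦ : heavyPotential T f using Nat.strong_induction_on generalizing f with
  | _ n ih =>
  by_cases hheavy : ∃ v, 2 ≤ f v ∧ T.degree v ≠ 1
  · obtain ⟨v, hv, hdeg⟩ := hheavy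
    obtain ⟨g, hg, hwg, hlt⟩ := hf.exists_heavyPotential_lt hT hv hdeg
    obtain ⟨g', hg', hwg', hg'₁⟩ := ih _ (hΦ ▸ hlt) hg rfl
    exact ⟨g', hg', hwg'.trans hwg, hg'₁⟩
  · push Not at hheavy
    exact ⟨f, hf, rfl, fun v hv hdeg => by have := mt (hheavy v) hdeg; omega⟩

end Broadcast

/-- Every tree has a maximum-weight bn-independent broadcast in which every
non-leaf broadcasting vertex broadcasts with strength 1. -/
theorem stmt7 {V : Type*} [Fintype V] (T : SimpleGraph V) (hT : T.IsTree) :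
    ∃ f : V → ℕ, BnIndep T f ∧ bweight f = alphaBn T ∧
      ∀ v, 0 < f v → T.degree v ≠ 1 → f v = 1 := by
  obtain ⟨f, hf, hwf⟩ := exists_bnIndep_bweight_eq_alphaBn T
  obtain ⟨g, hg, hwg, hg₁⟩ := hf.exists_forall_nonleaf_eq_one hT
  exact ⟨g, hg, hwg.trans hwf, hg₁⟩
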